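/- Consider the polar unicycle under the nonovershooting feedback with gains k₁,k₂,k₃,k₄ > 0. Along every closed-loop solution (ρ,δ,γ) on an interval I = [t₀,T*) with ρ(t) > 0 and |δ(t)| < π for all t ∈ I, the backstepping variable z(t) = γ(t) + (1/2) arctan(4k₂ tan(δ(t)/2)) satisfies the ODE dz/dt(t) = −(k₄ + (k₃/k₂) ψ(z(t),γ(t))² N(δ(t)) (1 + tan²(δ(t)/2))) z(t). Consequently, if z(t₀) ≥ 0 then 0 ≤ z(t) ≤ z(t₀) e^{−k₄ (t−t₀)} for all t ∈ I; in particular z is nonnegative and nonincreasing. -/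

import Mathlib

/-!
The feedback is built by backstepping so that along closed-loop solutions everything in `ż`
except `-K z` cancels: `v sin γ / ρ = (k₁/2) sin 2γ` cancels the first term of `ω`, and the
arctan term of `z` contributes `k₂ δ' / (cos²(δ/2) + 16 k₂² sin²(δ/2))`, which cancels the last
term of `ω̃`. The remaining equation `ż = -K z` has gain `K ≥ k₄ > 0`, so `z` cannot cross zero
(while negative it would be nondecreasing), and `z e^{k₄ (t - t₀)}` is nonincreasing.
-/
noncomputable section

open Real

/-- backstepping variable z = γ + (1/2) arctan(4k₂ tan(δ/2)) -/
def zN (k₂ δ γ : ℝ) : ℝ := γ + (1 / 2) * Real.arctan (4 * k₂ * Real.tan (δ / 2))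

/-- N(δ) = √(1 + 16k₂² tan²(δ/2)) -/
def NN (k₂ δ : ℝ) : ℝ := Real.sqrt (1 + 16 * k₂ ^ 2 * Real.tan (δ / 2) ^ 2)

/-- ψ(z,γ) = (sin(2z−2γ) + sin(2γ))/(2z) for z ≠ 0, ψ(0,γ) = cos(2γ) -/
def psiN (z γ : ℝ) : ℝ :=
  if z = 0 then Real.cos (2 * γ)
  else (Real.sin (2 * z - 2 * γ) + Real.sin (2 * γ)) / (2 * z)

/-- nonovershooting forward velocity v = k₁ ρ cos γ -/
def vN (k₁ ρ γ : ℝ) : ℝ := k₁ * ρ * Real.cos γ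

/-- ω̃ of the nonovershooting feedback -/
def omTildeN (k₁ k₂ k₃ k₄ δ γ : ℝ) : ℝ :=
  (k₄ + (k₃ / k₂) * psiN (zN k₂ δ γ) γ ^ 2 * NN k₂ δ
      * (1 + Real.tan (δ / 2) ^ 2)) * zN k₂ δ γ
    + (k₁ * k₂ / 2) * Real.sin (2 * γ)
        / (Real.cos (δ / 2) ^ 2 + 16 * k₂ ^ 2 * Real.sin (δ / 2) ^ 2)

/-- nonovershooting angular velocity ω = (k₁/2) sin(2γ) + ω̃ -/
def omN (k₁ k₂ k₃ k₄ δ γ : ℝ) : ℝ :=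
  (k₁ / 2) * Real.sin (2 * γ) + omTildeN k₁ k₂ k₃ k₄ δ γ

open Set

section LinearComparison

variable {f K : ℝ → ℝ} {a b : ℝ}

theorem nonneg_of_hasDerivAt_eq_neg_mul (hf : ∀ t ∈ Ico a b, HasDerivAt f (-K t * f t) t)
    (hK : ∀ t ∈ Ico a b, 0 ≤ K t) (ha : 0 ≤ f a) : ∀ t ∈ Ico a b, 0 ≤ f t := by
  intro u hu
  by_contra! hfu
  have hsub : Icc a u ⊆ Ico a b := fun s hs => ⟨hs.1, hs.2.trans_lt hu.2⟩
  have hcont : ContinuousOn f (Icc a u) := fun s hs =>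
    (hf s (hsub hs)).continuousAt.continuousWithinAt
  -- `c` is the last time in `[a, u]` at which `f` is still nonnegative
  obtain ⟨c, ⟨hc, hfc⟩, hc_max⟩ : ∃ c, IsGreatest (Icc a u ∩ f ⁻¹' Ici 0) c :=
    (isCompact_Icc.of_isClosed_subset
      (hcont.preimage_isClosed_of_isClosed isClosed_Icc isClosed_Ici)
      inter_subset_left).exists_isGreatest ⟨a, left_mem_Icc.2 hu.1, ha⟩
  have hcu : c < u := hc.2.lt_of_ne fun h => (h ▸ hfu).not_ge hfc
  have hneg : ∀ s ∈ Ioo c u, f s < 0 := fun s hs => by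
    by_contra! h
    exact hs.1.not_ge (hc_max ⟨⟨hc.1.trans hs.1.le, hs.2.le⟩, h⟩)
  have hsub' : Icc c u ⊆ Icc a u := Icc_subset_Icc_left hc.1
  have hmono : MonotoneOn f (Icc c u) := by
    refine monotoneOn_of_hasDerivWithinAt_nonneg (f' := fun s => -K s * f s) (convex_Icc c u)
      (hcont.mono hsub') ?_ ?_
    · rw [interior_Icc]
      exact fun s hs => (hf s (hsub (hsub' (Ioo_subset_Icc_self hs)))).hasDerivWithinAt
    · rw [interior_Icc]
      exact fun s hs => mul_nonneg_of_nonpos_of_nonpos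
        (neg_nonpos.2 (hK s (hsub (hsub' (Ioo_subset_Icc_self hs))))) (hneg s hs).le
  exact hfu.not_ge (hfc.trans (hmono (left_mem_Icc.2 hcu.le) (right_mem_Icc.2 hcu.le) hcu.le))

theorem le_mul_exp_of_hasDerivAt_eq_neg_mul {c : ℝ}
    (hf : ∀ t ∈ Ico a b, HasDerivAt f (-K t * f t) t) (hK : ∀ t ∈ Ico a b, c ≤ K t)
    (hf₀ : ∀ t ∈ Ico a b, 0 ≤ f t) : ∀ t ∈ Ico a b, f t ≤ f a * exp (-c * (t - a)) := by
  intro t ht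
  have hsub : Icc a t ⊆ Ico a b := fun s hs => ⟨hs.1, hs.2.trans_lt ht.2⟩
  -- `f` times the integrating factor `exp (c (s - a))` is nonincreasing
  have hg : ∀ s ∈ Ico a b, HasDerivAt (fun s => f s * exp (c * (s - a)))
      ((c - K s) * f s * exp (c * (s - a))) s := fun s hs => by
    refine ((hf s hs).mul (((hasDerivAt_id' s).sub_const a).const_mul c).exp).congr_deriv ?_
    ring
  have hanti : AntitoneOn (fun s => f s * exp (c * (s - a))) (Icc a t) := by
    refine antitoneOn_of_hasDerivWithinAt_nonpos
      (f' := fun s => (c - K s) * f s * exp (c * (s - a))) (convex_Icc a t)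
      (fun s hs => (hg s (hsub hs)).continuousAt.continuousWithinAt) ?_ ?_
    · rw [interior_Icc]
      exact fun s hs => (hg s (hsub (Ioo_subset_Icc_self hs))).hasDerivWithinAt
    · rw [interior_Icc]
      intro s hs
      have hs' := hsub (Ioo_subset_Icc_self hs)
      exact mul_nonpos_of_nonpos_of_nonneg
        (mul_nonpos_of_nonpos_of_nonneg (sub_nonpos.2 (hK s hs')) (hf₀ s hs')) (exp_pos _).le
  have h := hanti (left_mem_Icc.2 ht.1) (right_mem_Icc.2 ht.1) ht.1
  simp only [sub_self, mul_zero, exp_zero, mul_one] at h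
  rwa [neg_mul, exp_neg, ← div_eq_mul_inv, le_div_iff₀ (exp_pos _)]

end LinearComparison

theorem hasDerivAt_arctan_mul_tan_half {a x : ℝ} (hx : cos (x / 2) ≠ 0) :
    HasDerivAt (fun y => arctan (a * tan (y / 2)))
      (a / 2 / (cos (x / 2) ^ 2 + a ^ 2 * sin (x / 2) ^ 2)) x := by
  refine (((hasDerivAt_tan hx).comp x ((hasDerivAt_id x).div_const 2)).const_mul a).arctan
    |>.congr_deriv ?_
  simp only [Function.comp, id, tan_eq_sin_div_cos]
  field_simp

theorem hasDerivAt_zN {k₂ δ' γ' t : ℝ} {δ γ : ℝ → ℝ} (hδπ : |δ t| < π)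
    (hδ : HasDerivAt δ δ' t) (hγ : HasDerivAt γ γ' t) :
    HasDerivAt (fun s => zN k₂ (δ s) (γ s))
      (γ' + k₂ * δ' / (cos (δ t / 2) ^ 2 + 16 * k₂ ^ 2 * sin (δ t / 2) ^ 2)) t := by
  rw [abs_lt] at hδπ
  have hcos : cos (δ t / 2) ≠ 0 := (cos_pos_of_mem_Ioo ⟨by linarith, by linarith⟩).ne'
  refine (hγ.add (((hasDerivAt_arctan_mul_tan_half (a := 4 * k₂) hcos).comp t hδ).const_mul
    (1 / 2))).congr_deriv ?_
  ring

def zGain (k₂ k₃ k₄ δ γ : ℝ) : ℝ :=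
  k₄ + (k₃ / k₂) * psiN (zN k₂ δ γ) γ ^ 2 * NN k₂ δ * (1 + tan (δ / 2) ^ 2)

theorem le_zGain {k₂ k₃ : ℝ} (k₄ δ γ : ℝ) (hk₂ : 0 ≤ k₂) (hk₃ : 0 ≤ k₃) :
    k₄ ≤ zGain k₂ k₃ k₄ δ γ :=
  le_add_of_nonneg_right (by unfold NN; positivity)

theorem vN_div_mul_sin (k₁ : ℝ) {ρ : ℝ} (γ : ℝ) (hρ : ρ ≠ 0) :
    vN k₁ ρ γ / ρ * sin γ = k₁ / 2 * sin (2 * γ) := by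
  rw [vN, sin_two_mul]
  field_simp

theorem hasDerivAt_zN_closedLoop {k₁ k₂ k₃ k₄ t : ℝ} {ρ δ γ : ℝ → ℝ} (hρ : 0 < ρ t)
    (hδπ : |δ t| < π) (hδ : HasDerivAt δ (vN k₁ (ρ t) (γ t) / ρ t * sin (γ t)) t)
    (hγ : HasDerivAt γ (vN k₁ (ρ t) (γ t) / ρ t * sin (γ t) - omN k₁ k₂ k₃ k₄ (δ t) (γ t)) t) :
    HasDerivAt (fun s => zN k₂ (δ s) (γ s))
      (-zGain k₂ k₃ k₄ (δ t) (γ t) * zN k₂ (δ t) (γ t)) t := by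
  refine (hasDerivAt_zN hδπ hδ hγ).congr_deriv ?_
  rw [vN_div_mul_sin k₁ (γ t) hρ.ne', omN, omTildeN, zGain]
  ring

theorem nonovershooting_z_dynamics_and_decay
    (k₁ k₂ k₃ k₄ : ℝ) (hk₂ : 0 < k₂) (hk₃ : 0 < k₃) (hk₄ : 0 < k₄)
    (t₀ Tstar : ℝ)
    (ρ δ γ : ℝ → ℝ)
    (hρpos : ∀ t ∈ Set.Ico t₀ Tstar, 0 < ρ t)
    (hδπ : ∀ t ∈ Set.Ico t₀ Tstar, |δ t| < Real.pi)
    (hδ : ∀ t ∈ Set.Ico t₀ Tstar,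
      HasDerivAt δ ((vN k₁ (ρ t) (γ t) / ρ t) * Real.sin (γ t)) t)
    (hγ : ∀ t ∈ Set.Ico t₀ Tstar,
      HasDerivAt γ ((vN k₁ (ρ t) (γ t) / ρ t) * Real.sin (γ t)
        - omN k₁ k₂ k₃ k₄ (δ t) (γ t)) t) :
    (∀ t ∈ Set.Ico t₀ Tstar,
      HasDerivAt (fun s => zN k₂ (δ s) (γ s))
        (-(k₄ + (k₃ / k₂) * psiN (zN k₂ (δ t) (γ t)) (γ t) ^ 2 * NN k₂ (δ t)
            * (1 + Real.tan (δ t / 2) ^ 2)) * zN k₂ (δ t) (γ t)) t)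
    ∧ (0 ≤ zN k₂ (δ t₀) (γ t₀) →
        ∀ t ∈ Set.Ico t₀ Tstar,
          0 ≤ zN k₂ (δ t) (γ t)
          ∧ zN k₂ (δ t) (γ t)
              ≤ zN k₂ (δ t₀) (γ t₀) * Real.exp (-k₄ * (t - t₀))) := by
  have hz : ∀ t ∈ Ico t₀ Tstar, HasDerivAt (fun s => zN k₂ (δ s) (γ s))
      (-zGain k₂ k₃ k₄ (δ t) (γ t) * zN k₂ (δ t) (γ t)) t := fun t ht =>
    hasDerivAt_zN_closedLoop (hρpos t ht) (hδπ t ht) (hδ t ht) (hγ t ht)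
  have hgain : ∀ t ∈ Ico t₀ Tstar, k₄ ≤ zGain k₂ k₃ k₄ (δ t) (γ t) := fun t _ =>
    le_zGain k₄ (δ t) (γ t) hk₂.le hk₃.le
  refine ⟨hz, fun hz₀ => ?_⟩
  have hnonneg := nonneg_of_hasDerivAt_eq_neg_mul hz (fun t ht => hk₄.le.trans (hgain t ht)) hz₀
  exact fun t ht => ⟨hnonneg t ht, le_mul_exp_of_hasDerivAt_eq_neg_mul hz hgain hnonneg t ht⟩

end
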